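/- arXiv:1209.0666 — 3 statements merged into one kernel-verified Lean document; each statement's English description precedes it below -/
import Mathlib

section
/- Let Ω = ⋃_{i=1}^n (α_i, β_i) be a finite union of open intervals with α_1 < β_1 < α_2 < ... < α_n < β_n, and let p be a positive integer such that all endpoints α_i, β_i lie in (1/p)ℤ. If Λ ⊆ ℝ is a spectrum for Ω (i.e. {e^{2πiλx} : λ ∈ Λ} is an orthogonal basis of L²(Ω)), then Λ + p = Λ, i.e. p is a period of Λ. -/
open MeasureTheory Complex Set Bornology

/-- The exponential function `e_λ(x) = e^{2πiλx}`. -/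
noncomputable def expf (l : ℝ) : ℝ → ℂ := fun x =>
  Complex.exp (2 * Real.pi * Complex.I * (l : ℂ) * (x : ℂ))

/-- `Λ` is a spectrum for `Ω`: the exponentials `e_λ`, `λ ∈ Λ`, form an
orthogonal basis of `L²(Ω)` (mutually orthogonal and complete). -/
def IsSpectrum (Ω Λ : Set ℝ) : Prop :=
  (∀ l ∈ Λ, ∀ m ∈ Λ, l ≠ m →
    (∫ x in Ω, expf l x * (starRingEnd ℂ) (expf m x)) = 0) ∧
  (∀ f : ℝ → ℂ, MemLp f 2 (volume.restrict Ω) →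
    (∀ l ∈ Λ, (∫ x in Ω, f x * (starRingEnd ℂ) (expf l x)) = 0) →
    f =ᵐ[volume.restrict Ω] 0)

/-!
For `t ≠ 0` the Fourier transform of `𝟙_Ω` is `∫_Ω e_t = N(t) / (2πit)` with
`N(t) = ∑ᵢ (e_t(βᵢ) - e_t(αᵢ))`. Since all endpoints lie in `(1/p)ℤ`, `N` is `p`-periodic, and
`N(0) = 0`; so `Z = {t | N t = 0}` is `p`-periodic and equals `{0} ∪ {t | ∫_Ω e_t = 0}`.
Orthogonality says `Λ - Λ ⊆ Z`, and completeness says that for `x ∉ Λ` some `x - m`, `m ∈ Λ`,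
lies outside `Z`. If `x ∈ Λ` but `x + p ∉ Λ`, pick such an `m` for `x + p`: then
`x + p - m ∉ Z`, while `x - m ∈ Z`, contradicting periodicity.
-/

open Function

theorem add_mem_iff_of_periodic {G M : Type*} [AddCommGroup G] [Zero M] {Λ : Set G}
    {N : G → M} {p : G} (hN : Periodic N p)
    (hdiff : ∀ l ∈ Λ, ∀ m ∈ Λ, N (l - m) = 0)
    (hmax : ∀ x ∉ Λ, ∃ m ∈ Λ, N (x - m) ≠ 0) (x : G) :
    x ∈ Λ ↔ x + p ∈ Λ := by
  have key : ∀ q : G, Periodic N q → ∀ y ∈ Λ, y + q ∈ Λ := by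
    intro q hq y hy
    by_contra hyq
    obtain ⟨m, hm, hne⟩ := hmax _ hyq
    rw [add_sub_right_comm, hq] at hne
    exact hne (hdiff y hy m hm)
  refine ⟨key p hN x, fun h => ?_⟩
  simpa using key (-p) hN.neg _ h

theorem expf_add (s t x : ℝ) : expf (s + t) x = expf s x * expf t x := by
  simp only [expf, ← Complex.exp_add]
  push_cast
  ring_nf

theorem expf_zero (x : ℝ) : expf 0 x = 1 := by
  simp [expf]

theorem expf_mul_conj (l m x : ℝ) :
    expf l x * (starRingEnd ℂ) (expf m x) = expf (l - m) x := by
  simp only [expf, ← Complex.exp_conj, ← Complex.exp_add, map_mul, map_ofNat, Complex.conj_I,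
    Complex.conj_ofReal]
  push_cast
  ring_nf

theorem norm_expf (l x : ℝ) : ‖expf l x‖ = 1 := by
  rw [expf, Complex.norm_exp]
  simp

theorem continuous_expf (l : ℝ) : Continuous (expf l) := by
  unfold expf
  fun_prop

theorem expf_self_intCast_div (p : ℝ) (k : ℤ) : expf p (k / p) = 1 := by
  rcases eq_or_ne p 0 with rfl | hp
  · simp [expf]
  · have h : 2 * (Real.pi : ℂ) * I * (p : ℂ) * ((k / p : ℝ) : ℂ) = k * (2 * Real.pi * I) := by
      have hp' : (p : ℂ) ≠ 0 := ofReal_ne_zero.mpr hp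
      push_cast
      field_simp
    rw [expf, h, Complex.exp_int_mul_two_pi_mul_I]

theorem expf_add_of_mem_intCast_div {t p x : ℝ} (hx : ∃ k : ℤ, x = k / p) :
    expf (t + p) x = expf t x := by
  obtain ⟨k, rfl⟩ := hx
  rw [expf_add, expf_self_intCast_div, mul_one]

theorem setIntegral_expf_Ioo {t : ℝ} (ht : t ≠ 0) {a b : ℝ} (hab : a ≤ b) :
    ∫ x in Ioo a b, expf t x = (expf t b - expf t a) / (2 * Real.pi * I * t) := by
  have hc : 2 * (Real.pi : ℂ) * I * t ≠ 0 := by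
    simp [Real.pi_ne_zero, ht]
  rw [← integral_Ioc_eq_integral_Ioo, ← intervalIntegral.integral_of_le hab]
  simpa [expf, mul_comm] using integral_exp_mul_complex (a := a) (b := b) hc

theorem pairwise_disjoint_Ioo_of_lt {ι : Type*} [LinearOrder ι] {α β : ι → ℝ}
    (hord : ∀ i j, i < j → β i ≤ α j) : Pairwise (Disjoint on fun i => Ioo (α i) (β i)) :=
  (pairwise_disjoint_on _).2 fun i j hij =>
    disjoint_left.2 fun _ hi hj => (hj.1.trans hi.2).not_ge (hord i j hij)

section IntervalUnion

variable {ι : Type*} [Fintype ι] (α β : ι → ℝ)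

noncomputable def endpointSum (t : ℝ) : ℂ :=
  ∑ i, (expf t (β i) - expf t (α i))

theorem endpointSum_zero : endpointSum α β 0 = 0 := by
  simp [endpointSum, expf_zero]

variable {α β}

theorem endpointSum_periodic {p : ℝ} (hα : ∀ i, ∃ k : ℤ, α i = k / p)
    (hβ : ∀ i, ∃ k : ℤ, β i = k / p) : Periodic (endpointSum α β) p := fun t => by
  simp only [endpointSum, expf_add_of_mem_intCast_div (hα _), expf_add_of_mem_intCast_div (hβ _)]

theorem setIntegral_expf_iUnion_Ioo (hab : ∀ i, α i ≤ β i)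
    (hdisj : Pairwise (Disjoint on fun i => Ioo (α i) (β i))) {t : ℝ} (ht : t ≠ 0) :
    ∫ x in ⋃ i, Ioo (α i) (β i), expf t x = endpointSum α β t / (2 * Real.pi * I * t) := by
  have hint : ∀ i, IntegrableOn (expf t) (Ioo (α i) (β i)) :=
    fun i => (continuous_expf t).integrableOn_Icc.mono_set Ioo_subset_Icc_self
  rw [integral_iUnion (fun _ => measurableSet_Ioo) hdisj (integrableOn_finite_iUnion.mpr hint),
    tsum_fintype, endpointSum, Finset.sum_div]
  exact Finset.sum_congr rfl fun i _ => setIntegral_expf_Ioo ht (hab i)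

theorem setIntegral_expf_iUnion_Ioo_eq_zero_iff (hab : ∀ i, α i ≤ β i)
    (hdisj : Pairwise (Disjoint on fun i => Ioo (α i) (β i))) {t : ℝ} (ht : t ≠ 0) :
    ∫ x in ⋃ i, Ioo (α i) (β i), expf t x = 0 ↔ endpointSum α β t = 0 := by
  rw [setIntegral_expf_iUnion_Ioo hab hdisj ht, div_eq_zero_iff,
    or_iff_left (by simp [Real.pi_ne_zero, ht])]

end IntervalUnion

namespace IsSpectrum

variable {Ω Λ : Set ℝ}

theorem setIntegral_expf_sub_eq_zero (hspec : IsSpectrum Ω Λ) {l m : ℝ} (hl : l ∈ Λ)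
    (hm : m ∈ Λ) (hlm : l ≠ m) : ∫ x in Ω, expf (l - m) x = 0 := by
  simpa only [expf_mul_conj] using hspec.1 l hl m hm hlm

theorem exists_setIntegral_expf_sub_ne_zero (hspec : IsSpectrum Ω Λ) (hΩ₀ : volume Ω ≠ 0)
    (hΩ : volume Ω ≠ ⊤) (x : ℝ) : ∃ m ∈ Λ, ∫ y in Ω, expf (x - m) y ≠ 0 := by
  have : IsFiniteMeasure (volume.restrict Ω) := isFiniteMeasure_restrict.mpr hΩ
  have hmem : MemLp (expf x) 2 (volume.restrict Ω) :=
    .of_bound (continuous_expf x).aestronglyMeasurable 1 (.of_forall fun y => (norm_expf x y).le)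
  have hnonzero : ¬ expf x =ᵐ[volume.restrict Ω] 0 := fun h => by
    have hfalse : ∀ᵐ y ∂volume.restrict Ω, False := h.mono fun y hy => Complex.exp_ne_zero _ hy
    rw [Filter.eventually_false_iff_eq_bot, ae_eq_bot, Measure.restrict_eq_zero] at hfalse
    exact hΩ₀ hfalse
  by_contra! h
  exact hnonzero (hspec.2 _ hmem fun m hm => by simp only [expf_mul_conj, h m hm])

end IsSpectrum

theorem spectrum_of_union_of_intervals_with_endpoints_in_invP_lattice_is_periodic_general
    (n : ℕ) (hn : 0 < n) (α β : Fin n → ℝ)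
    (hab : ∀ i, α i < β i)
    (hord : ∀ i j : Fin n, i < j → β i < α j)
    (p : ℕ)
    (hα : ∀ i, ∃ k : ℤ, α i = (k : ℝ) / p)
    (hβ : ∀ i, ∃ k : ℤ, β i = (k : ℝ) / p)
    (Ω : Set ℝ) (hΩ : Ω = ⋃ i, Ioo (α i) (β i))
    (Λ : Set ℝ) (hspec : IsSpectrum Ω Λ) :
    ∀ x : ℝ, x ∈ Λ ↔ x + p ∈ Λ := by
  subst hΩ
  have hle : ∀ i, α i ≤ β i := fun i => (hab i).le
  have hdisj := pairwise_disjoint_Ioo_of_lt fun i j hij => (hord i j hij).le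
  have hΩ₀ : volume (⋃ i, Ioo (α i) (β i)) ≠ 0 :=
    (isOpen_iUnion fun _ => isOpen_Ioo).measure_ne_zero volume
      (nonempty_iUnion.2 ⟨⟨0, hn⟩, nonempty_Ioo.2 (hab _)⟩)
  have hΩ : volume (⋃ i, Ioo (α i) (β i)) ≠ ⊤ :=
    (isBounded_iUnion.2 fun _ => Metric.isBounded_Ioo _ _).measure_lt_top.ne
  refine add_mem_iff_of_periodic (endpointSum_periodic hα hβ) (fun l hl m hm => ?_) fun x hx => ?_
  · rcases eq_or_ne l m with rfl | hlm
    · rw [sub_self, endpointSum_zero]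
    · exact (setIntegral_expf_iUnion_Ioo_eq_zero_iff hle hdisj (sub_ne_zero.2 hlm)).1
        (hspec.setIntegral_expf_sub_eq_zero hl hm hlm)
  · obtain ⟨m, hm, hne⟩ := hspec.exists_setIntegral_expf_sub_ne_zero hΩ₀ hΩ x
    have hxm : x - m ≠ 0 := sub_ne_zero.2 fun h => hx (h ▸ hm)
    exact ⟨m, hm, (setIntegral_expf_iUnion_Ioo_eq_zero_iff hle hdisj hxm).not.1 hne⟩

theorem spectrum_of_union_of_intervals_with_endpoints_in_invP_lattice_is_periodic
    (n : ℕ) (hn : 0 < n) (α β : Fin n → ℝ)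
    (hab : ∀ i, α i < β i)
    (hord : ∀ i j : Fin n, i < j → β i < α j)
    (p : ℕ) (hp : 0 < p)
    (hα : ∀ i, ∃ k : ℤ, α i = (k : ℝ) / p)
    (hβ : ∀ i, ∃ k : ℤ, β i = (k : ℝ) / p)
    (Ω : Set ℝ) (hΩ : Ω = ⋃ i, Ioo (α i) (β i))
    (Λ : Set ℝ) (hspec : IsSpectrum Ω Λ) :
    ∀ x : ℝ, x ∈ Λ ↔ x + p ∈ Λ :=
  spectrum_of_union_of_intervals_with_endpoints_in_invP_lattice_is_periodic_general n hn α β hab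
    hord p hα hβ Ω hΩ Λ hspec
end

section
/- Let Ω ⊆ ℝ be a bounded measurable set of measure 1 and p ∈ ℕ such that Ω p-tiles ℝ by (1/p)ℤ (i.e. ∑_{j∈ℤ} χ_Ω(x + j/p) = p a.e.). For x ∈ ℝ let Ω_x = {k ∈ ℤ : x + k/p ∈ Ω} = {k_0(x) < ... < k_{p-1}(x)}. Then the operator W : L²(Ω) → L²([0,1/p), ℂ^p) defined by (Wf)(y) = (f(y + k_0(y)/p), ..., f(y + k_{p-1}(y)/p))ᵗ is an isometric isomorphism. -/
open MeasureTheory Complex Set Bornology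

/-!
Since the translates of `[0, 1/a)` by `(1/a)ℤ` tile `ℝ`, and almost every fibre
`{j | x + j/a ∈ Ω}` is enumerated by the `k i x`, every measurable `F ≥ 0` satisfies
`∫_Ω F = ∫_{[0,1/a)} ∑_i F (y + k_i(y)/a)`. Applied to `‖f‖²` this makes the slicing map
isometric; applied to indicators it shows that each `y ↦ y + k_i(y)/a` is quasi-measure-preserving
from `[0, 1/a)` to `Ω`, so the map is well defined on a.e.-classes. It is onto: writing
`x = y + ⌊a x⌋/a` with `y = fract (a x)/a ∈ [0, 1/a)`, the function whose value at `x` is the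
coordinate of `g y` with fibre index `⌊a x⌋` is a preimage of `g`.
-/

open scoped ENNReal

theorem lintegral_eq_tsum_setLIntegral_Ico_add_zsmul {T : ℝ} (hT : 0 < T)
    (F : ℝ → ℝ≥0∞) :
    ∫⁻ x, F x = ∑' n : ℤ, ∫⁻ y in Ico 0 T, F (y + n • T) := by
  rw [← setLIntegral_univ, ← iUnion_Ico_zsmul hT,
    lintegral_iUnion (fun _ => measurableSet_Ico) (pairwise_disjoint_Ico_zsmul T)]
  congr 1 with n
  rw [← (measurePreserving_add_right volume (n • T)).setLIntegral_comp_preimage_emb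
    (measurableEmbedding_addRight (n • T))]
  congr
  ext y
  simp [add_smul]

theorem PiLp.enorm_sq_eq_of_L2 {ι : Type*} [Fintype ι] {β : ι → Type*}
    [∀ i, SeminormedAddCommGroup (β i)] (x : PiLp 2 β) :
    ‖x‖ₑ ^ 2 = ∑ i, ‖x i‖ₑ ^ 2 := by
  simp_rw [enorm_eq_nnnorm, ← ENNReal.coe_pow, ← ENNReal.ofNNReal_finsetSum,
    PiLp.nnnorm_eq_of_L2, NNReal.sq_sqrt]

theorem aestronglyMeasurable_toLp_pi {ι α E : Type*} [Fintype ι] [MeasurableSpace α]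
    {μ : Measure α} [NormedAddCommGroup E] {q : ℝ≥0∞} [Fact (1 ≤ q)] {f : ι → α → E}
    (hf : ∀ i, AEStronglyMeasurable (f i) μ) :
    AEStronglyMeasurable (fun x => WithLp.toLp q fun i => f i x) μ := by
  classical
  have hsum : (fun x => WithLp.toLp q fun i => f i x) =
      ∑ i, fun x => WithLp.toLp q (Pi.single i (f i x)) := by
    ext x : 1
    simp [← WithLp.toLp_sum, Finset.univ_sum_single]
  rw [hsum]
  exact Finset.aestronglyMeasurable_sum _ fun i _ =>
    ((PiLp.continuous_toLp q _).comp (continuous_single i)).comp_aestronglyMeasurable (hf i)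

theorem measurable_add_intCast_div {κ : ℝ → ℤ} (hκ : Measurable κ) (a : ℝ) :
    Measurable fun y => y + κ y / a := by
  fun_prop

theorem mul_mem_Ico_zero_one {a y : ℝ} (ha : 0 < a) (hy : y ∈ Ico 0 (1 / a)) :
    a * y ∈ Ico 0 1 :=
  ⟨mul_nonneg ha.le hy.1, (lt_div_iff₀' ha).1 hy.2⟩

theorem floor_mul_add_intCast_div {a y : ℝ} (ha : 0 < a) (hy : y ∈ Ico 0 (1 / a)) (n : ℤ) :
    ⌊a * (y + n / a)⌋ = n := by
  rw [mul_add, mul_div_cancel₀ _ ha.ne', Int.floor_add_intCast,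
    Int.floor_eq_zero_iff.2 (mul_mem_Ico_zero_one ha hy), zero_add]

theorem fract_mul_add_intCast_div_div {a y : ℝ} (ha : 0 < a) (hy : y ∈ Ico 0 (1 / a))
    (n : ℤ) :
    Int.fract (a * (y + n / a)) / a = y := by
  rw [mul_add, mul_div_cancel₀ _ ha.ne', Int.fract_add_intCast,
    Int.fract_eq_self.2 (mul_mem_Ico_zero_one ha hy), mul_div_cancel_left₀ _ ha.ne']

section Slicing

variable {ι : Type*} {Ω : Set ℝ} {a : ℝ} {k : ι → ℝ → ℤ} {E : Type*}

def EnumeratesFibres (Ω : Set ℝ) (a : ℝ) (k : ι → ℝ → ℤ) : Prop :=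
  ∀ᵐ x, Function.Injective (fun i => k i x) ∧
    ∀ j : ℤ, x + j / a ∈ Ω ↔ ∃ i, k i x = j

noncomputable def slice (a : ℝ) (k : ι → ℝ → ℤ) (f : ℝ → E) :
    ℝ → PiLp 2 fun _ : ι => E :=
  fun y => WithLp.toLp 2 fun i => f (y + k i y / a)

theorem slice_add [AddCommGroup E] (f g : ℝ → E) :
    slice a k (f + g) = slice a k f + slice a k g :=
  rfl

theorem slice_smul {𝕜 : Type*} [SMul 𝕜 E] (c : 𝕜) (f : ℝ → E) :
    slice a k (c • f) = c • slice a k f :=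
  rfl

variable [Fintype ι]

theorem tsum_indicator_add_div_eq_sum {x : ℝ} (hinj : Function.Injective (fun i => k i x))
    (hmem : ∀ j : ℤ, x + j / a ∈ Ω ↔ ∃ i, k i x = j) (F : ℝ → ℝ≥0∞) :
    ∑' j : ℤ, Ω.indicator F (x + j / a) = ∑ i, F (x + k i x / a) := by
  have hsupp : (fun j : ℤ => Ω.indicator F (x + j / a)).support ⊆ range (fun i => k i x) :=
    fun j hj => (hmem j).1 (mem_of_indicator_ne_zero hj)
  rw [← hinj.tsum_eq hsupp, tsum_fintype]
  exact Finset.sum_congr rfl fun i _ => indicator_of_mem ((hmem _).2 ⟨i, rfl⟩) F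

theorem setLIntegral_eq_setLIntegral_Ico_sum (hΩ : MeasurableSet Ω) (ha : 0 < a)
    (hk : EnumeratesFibres Ω a k) {F : ℝ → ℝ≥0∞} (hF : Measurable F) :
    ∫⁻ x in Ω, F x = ∫⁻ y in Ico 0 (1 / a), ∑ i, F (y + k i y / a) := by
  rw [← lintegral_indicator hΩ, lintegral_eq_tsum_setLIntegral_Ico_add_zsmul (one_div_pos.2 ha),
    ← lintegral_tsum]
  · refine lintegral_congr_ae ((ae_restrict_of_ae hk).mono fun y hy => ?_)
    simp only [zsmul_eq_mul, mul_one_div]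
    exact tsum_indicator_add_div_eq_sum hy.1 hy.2 F
  · exact fun n => ((hF.indicator hΩ).comp (measurable_add_const _)).aemeasurable

theorem map_restrict_Ico_add_div_le (hΩ : MeasurableSet Ω) (ha : 0 < a)
    (hkm : ∀ i, Measurable (k i)) (hk : EnumeratesFibres Ω a k) (i : ι) :
    (volume.restrict (Ico 0 (1 / a))).map (fun y => y + k i y / a) ≤ volume.restrict Ω := by
  refine Measure.le_intro fun s hs _ => ?_
  have hφ := measurable_add_intCast_div (hkm i) a
  calc (volume.restrict (Ico 0 (1 / a))).map (fun y => y + k i y / a) s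
      = ∫⁻ y in Ico 0 (1 / a), s.indicator 1 (y + k i y / a) := by
        rw [← lintegral_indicator_one hs, lintegral_map (measurable_one.indicator hs) hφ]
    _ ≤ ∫⁻ y in Ico 0 (1 / a), ∑ j, s.indicator 1 (y + k j y / a) :=
        lintegral_mono fun y => Finset.single_le_sum (f := fun j => s.indicator 1 (y + k j y / a))
          (fun _ _ => zero_le) (Finset.mem_univ i)
    _ = volume.restrict Ω s := by
        rw [← setLIntegral_eq_setLIntegral_Ico_sum hΩ ha hk (measurable_one.indicator hs),
          lintegral_indicator_one hs]

theorem quasiMeasurePreserving_add_div (hΩ : MeasurableSet Ω) (ha : 0 < a)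
    (hkm : ∀ i, Measurable (k i)) (hk : EnumeratesFibres Ω a k) (i : ι) :
    Measure.QuasiMeasurePreserving (fun y => y + k i y / a)
      (volume.restrict (Ico 0 (1 / a))) (volume.restrict Ω) :=
  ⟨measurable_add_intCast_div (hkm i) a,
    Measure.absolutelyContinuous_of_le (map_restrict_Ico_add_div_le hΩ ha hkm hk i)⟩

theorem slice_congr_ae (hΩ : MeasurableSet Ω) (ha : 0 < a) (hkm : ∀ i, Measurable (k i))
    (hk : EnumeratesFibres Ω a k) {f g : ℝ → E} (h : f =ᵐ[volume.restrict Ω] g) :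
    slice a k f =ᵐ[volume.restrict (Ico 0 (1 / a))] slice a k g := by
  have hcomp := fun i => (quasiMeasurePreserving_add_div hΩ ha hkm hk i).ae_eq_comp h
  filter_upwards [ae_all_iff.2 hcomp] with y hy
  exact congrArg (WithLp.toLp 2) (funext hy)

variable [NormedAddCommGroup E]

theorem aestronglyMeasurable_slice (hΩ : MeasurableSet Ω) (ha : 0 < a)
    (hkm : ∀ i, Measurable (k i)) (hk : EnumeratesFibres Ω a k) {f : ℝ → E}
    (hf : AEStronglyMeasurable f (volume.restrict Ω)) :
    AEStronglyMeasurable (slice a k f) (volume.restrict (Ico 0 (1 / a))) :=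
  aestronglyMeasurable_toLp_pi fun i =>
    hf.comp_quasiMeasurePreserving (quasiMeasurePreserving_add_div hΩ ha hkm hk i)

theorem eLpNorm_slice (hΩ : MeasurableSet Ω) (ha : 0 < a) (hkm : ∀ i, Measurable (k i))
    (hk : EnumeratesFibres Ω a k) {f : ℝ → E}
    (hf : AEStronglyMeasurable f (volume.restrict Ω)) :
    eLpNorm (slice a k f) 2 (volume.restrict (Ico 0 (1 / a))) =
      eLpNorm f 2 (volume.restrict Ω) := by
  rw [eLpNorm_congr_ae (slice_congr_ae hΩ ha hkm hk hf.ae_eq_mk), eLpNorm_congr_ae hf.ae_eq_mk]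
  simp only [eLpNorm_eq_lintegral_rpow_enorm_toReal two_ne_zero ENNReal.ofNat_ne_top,
    ENNReal.toReal_ofNat, ENNReal.rpow_two]
  rw [setLIntegral_eq_setLIntegral_Ico_sum hΩ ha hk (hf.stronglyMeasurable_mk.enorm.pow_const 2)]
  simp only [slice, PiLp.enorm_sq_eq_of_L2]

theorem memLp_slice_iff (hΩ : MeasurableSet Ω) (ha : 0 < a) (hkm : ∀ i, Measurable (k i))
    (hk : EnumeratesFibres Ω a k) {f : ℝ → E}
    (hf : AEStronglyMeasurable f (volume.restrict Ω)) :
    MemLp (slice a k f) 2 (volume.restrict (Ico 0 (1 / a))) ↔ MemLp f 2 (volume.restrict Ω) := by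
  simp only [MemLp, hf, aestronglyMeasurable_slice hΩ ha hkm hk hf, eLpNorm_slice hΩ ha hkm hk hf,
    true_and]

theorem memLp_slice_coeFn (hΩ : MeasurableSet Ω) (ha : 0 < a) (hkm : ∀ i, Measurable (k i))
    (hk : EnumeratesFibres Ω a k) (f : Lp E 2 (volume.restrict Ω)) :
    MemLp (slice a k f) 2 (volume.restrict (Ico 0 (1 / a))) :=
  (memLp_slice_iff hΩ ha hkm hk (Lp.aestronglyMeasurable f)).2 (Lp.memLp f)

noncomputable def unslice (a : ℝ) (k : ι → ℝ → ℤ) (g : ℝ → PiLp 2 fun _ : ι => E) :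
    ℝ → E :=
  fun x => ∑ i,
    if k i (Int.fract (a * x) / a) = ⌊a * x⌋ then g (Int.fract (a * x) / a) i else 0

theorem slice_unslice (ha : 0 < a) (hk : EnumeratesFibres Ω a k)
    (g : ℝ → PiLp 2 fun _ : ι => E) :
    slice a k (unslice a k g) =ᵐ[volume.restrict (Ico 0 (1 / a))] g := by
  filter_upwards [ae_restrict_of_ae hk, ae_restrict_mem measurableSet_Ico] with y hy hyI
  ext i
  simp only [slice, unslice, floor_mul_add_intCast_div ha hyI,
    fract_mul_add_intCast_div_div ha hyI]
  rw [Finset.sum_eq_single i (fun j _ hji => if_neg (hy.1.ne hji)) (by simp)]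
  exact if_pos rfl

theorem stronglyMeasurable_unslice (hkm : ∀ i, Measurable (k i))
    {g : ℝ → PiLp 2 fun _ : ι => E} (hg : StronglyMeasurable g) :
    StronglyMeasurable (unslice a k g) := by
  have hy : Measurable fun x : ℝ => Int.fract (a * x) / a := by fun_prop
  refine Finset.stronglyMeasurable_fun_sum _ fun i _ =>
    StronglyMeasurable.ite ?_ ?_ stronglyMeasurable_const
  · exact measurableSet_eq_fun ((hkm i).comp hy) (by fun_prop)
  · exact (PiLp.continuous_apply 2 (fun _ : ι => E) i).comp_stronglyMeasurable
      (hg.comp_measurable hy)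

theorem memLp_unslice (hΩ : MeasurableSet Ω) (ha : 0 < a) (hkm : ∀ i, Measurable (k i))
    (hk : EnumeratesFibres Ω a k) {g : ℝ → PiLp 2 fun _ : ι => E} (hgm : StronglyMeasurable g)
    (hg : MemLp g 2 (volume.restrict (Ico 0 (1 / a)))) :
    MemLp (unslice a k g) 2 (volume.restrict Ω) :=
  (memLp_slice_iff hΩ ha hkm hk (stronglyMeasurable_unslice hkm hgm).aestronglyMeasurable).1
    (hg.ae_eq (slice_unslice ha hk g).symm)

variable (𝕜 : Type*) [NormedField 𝕜] [NormedSpace 𝕜 E]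

noncomputable def sliceLp (hΩ : MeasurableSet Ω) (ha : 0 < a) (hkm : ∀ i, Measurable (k i))
    (hk : EnumeratesFibres Ω a k) :
    Lp E 2 (volume.restrict Ω) →ₗᵢ[𝕜]
      Lp (PiLp 2 fun _ : ι => E) 2 (volume.restrict (Ico 0 (1 / a))) where
  toFun f := (memLp_slice_coeFn hΩ ha hkm hk f).toLp _
  map_add' f g := by
    rw [← MemLp.toLp_add, MemLp.toLp_eq_toLp_iff, ← slice_add]
    exact slice_congr_ae hΩ ha hkm hk (Lp.coeFn_add f g)
  map_smul' c f := by
    rw [RingHom.id_apply, ← MemLp.toLp_const_smul, MemLp.toLp_eq_toLp_iff, ← slice_smul]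
    exact slice_congr_ae hΩ ha hkm hk (Lp.coeFn_smul c f)
  norm_map' f := by
    rw [LinearMap.coe_mk, AddHom.coe_mk, Lp.norm_toLp,
      eLpNorm_slice hΩ ha hkm hk (Lp.aestronglyMeasurable f), Lp.norm_def]

theorem coeFn_sliceLp (hΩ : MeasurableSet Ω) (ha : 0 < a) (hkm : ∀ i, Measurable (k i))
    (hk : EnumeratesFibres Ω a k) (f : Lp E 2 (volume.restrict Ω)) :
    sliceLp 𝕜 hΩ ha hkm hk f =ᵐ[volume.restrict (Ico 0 (1 / a))] slice a k f :=
  (memLp_slice_coeFn hΩ ha hkm hk f).coeFn_toLp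

theorem sliceLp_surjective (hΩ : MeasurableSet Ω) (ha : 0 < a) (hkm : ∀ i, Measurable (k i))
    (hk : EnumeratesFibres Ω a k) : Function.Surjective (sliceLp 𝕜 (E := E) hΩ ha hkm hk) := by
  intro G
  have hG := Lp.aestronglyMeasurable G
  have hg := memLp_unslice hΩ ha hkm hk hG.stronglyMeasurable_mk ((Lp.memLp G).ae_eq hG.ae_eq_mk)
  refine ⟨hg.toLp _, Lp.ext ?_⟩
  exact (coeFn_sliceLp 𝕜 hΩ ha hkm hk _).trans <|
    (slice_congr_ae hΩ ha hkm hk (MemLp.coeFn_toLp hg)).trans <|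
    (slice_unslice ha hk _).trans hG.ae_eq_mk.symm

end Slicing

theorem slicing_operator_is_isometric_isomorphism_general
    (Ω : Set ℝ) (hmeas : MeasurableSet Ω)
    (p : ℕ) (hp : 0 < p)
    (k : Fin p → ℝ → ℤ) (hkm : ∀ i, Measurable (k i))
    (hk : ∀ᵐ x : ℝ ∂volume,
      StrictMono (fun i : Fin p => k i x) ∧
      ∀ j : ℤ, (x + (j : ℝ) / p ∈ Ω ↔ ∃ i : Fin p, k i x = j)) :
    ∃ W : Lp ℂ 2 (volume.restrict Ω) ≃ₗᵢ[ℂ]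
        Lp (EuclideanSpace ℂ (Fin p)) 2 (volume.restrict (Ico (0 : ℝ) (1 / p))),
      ∀ (f : ℝ → ℂ) (hf : MemLp f 2 (volume.restrict Ω)), (∀ x ∉ Ω, f x = 0) →
        (W (hf.toLp f) : ℝ → EuclideanSpace ℂ (Fin p))
          =ᵐ[volume.restrict (Ico (0 : ℝ) (1 / p))]
        (fun y => WithLp.toLp 2 (fun i => f (y + (k i y : ℝ) / p)) : ℝ → EuclideanSpace ℂ (Fin p)) := by
  have hp' : (0 : ℝ) < p := Nat.cast_pos.2 hp
  have hfib : EnumeratesFibres Ω p k := hk.mono fun x hx => ⟨hx.1.injective, hx.2⟩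
  refine ⟨.ofSurjective _ (sliceLp_surjective ℂ hmeas hp' hkm hfib), fun f hf _ => ?_⟩
  exact (coeFn_sliceLp ℂ hmeas hp' hkm hfib _).trans
    (slice_congr_ae hmeas hp' hkm hfib (MemLp.coeFn_toLp hf))

/-- If `Ω` of measure one `p`-tiles `ℝ` by `(1/p)ℤ`, and `k_0(x) < ... < k_{p-1}(x)`
enumerates `Ω_x = {k ∈ ℤ : x + k/p ∈ Ω}`, then
`W : L²(Ω) → L²([0,1/p), ℂ^p)`, `(Wf)(y) = (f(y + k_i(y)/p))_{i=0}^{p-1}`,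
is an isometric isomorphism. -/
theorem slicing_operator_is_isometric_isomorphism
    (Ω : Set ℝ) (hbd : IsBounded Ω) (hmeas : MeasurableSet Ω)
    (hvol : volume Ω = 1)
    (p : ℕ) (hp : 0 < p)
    (htile : ∀ᵐ x : ℝ ∂volume, ({j : ℤ | x + (j : ℝ) / p ∈ Ω}).ncard = p)
    (k : Fin p → ℝ → ℤ) (hkm : ∀ i, Measurable (k i))
    (hk : ∀ᵐ x : ℝ ∂volume,
      StrictMono (fun i : Fin p => k i x) ∧
      ∀ j : ℤ, (x + (j : ℝ) / p ∈ Ω ↔ ∃ i : Fin p, k i x = j)) :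
    ∃ W : Lp ℂ 2 (volume.restrict Ω) ≃ₗᵢ[ℂ]
        Lp (EuclideanSpace ℂ (Fin p)) 2 (volume.restrict (Ico (0 : ℝ) (1 / p))),
      ∀ (f : ℝ → ℂ) (hf : MemLp f 2 (volume.restrict Ω)), (∀ x ∉ Ω, f x = 0) →
        (W (hf.toLp f) : ℝ → EuclideanSpace ℂ (Fin p))
          =ᵐ[volume.restrict (Ico (0 : ℝ) (1 / p))]
        (fun y => WithLp.toLp 2 (fun i => f (y + (k i y : ℝ) / p)) : ℝ → EuclideanSpace ℂ (Fin p)) :=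
  slicing_operator_is_isometric_isomorphism_general Ω hmeas p hp k hkm hk
end

section
/- Let Γ = {λ_0, ..., λ_{p-1}} ⊆ ℝ be a p-element set and A ⊆ ℤ a p-element set such that (1/p)A is a spectrum for Γ. For bounded measurable Ω of measure 1 that p-tiles ℝ by (1/p)ℤ, suppose that for a.e. y ∈ [0,1/p) the vectors v_i(y) = (1/√p)(e^{2πiλ_i k_0(y)/p}, ..., e^{2πiλ_i k_{p-1}(y)/p})ᵗ, i = 0,...,p−1, form an orthonormal basis of ℂ^p. Then the functions F_{i,n}(y) = e^{2πi(λ_i+np)y} v_i(y)·√p, i ∈ {0,...,p−1}, n ∈ ℤ, form an orthogonal basis of L²([0,1/p), ℂ^p). -/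
/-!
Write `F i n = e_n • u_i`, where `e_n y = exp (2πi n p y)` are the Fourier characters of period
`1/p` and `u_i = F i 0`. The hypothesis on the `v_i` says that for a.e. `y` the vectors `u_i y`
are orthogonal in `ℂ^p`, each of squared norm `p`, so orthogonality of the `F i n` reduces to
that of the characters. If `H` is orthogonal to every `F i n`, then all Fourier coefficients of
the scalar function `y ↦ ⟨H y, u_i y⟩` vanish, so by Parseval it vanishes a.e.; as the `u_i y`
form a basis of `ℂ^p`, `H = 0` a.e.
-/

open MeasureTheory Complex Set Bornology

/-- `Ω` tiles `ℝ` by the translation set `T`: the translates `Ω + t`, `t ∈ T`,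
partition `ℝ` up to Lebesgue measure zero. -/
def TilesReal (Ω T : Set ℝ) : Prop :=
  (∀ t ∈ T, ∀ s ∈ T, t ≠ s →
    volume ({x : ℝ | x - t ∈ Ω} ∩ {x : ℝ | x - s ∈ Ω}) = 0) ∧
  volume ({x : ℝ | ∀ t ∈ T, x - t ∉ Ω}) = 0

/-- `A` tiles `ℤ` by `T`: every integer `k` has a unique representation
`k = a + t` with `a ∈ A`, `t ∈ T`. -/
def TilesZ (A T : Set ℤ) : Prop :=
  ∀ k : ℤ, ∃! q : ℤ × ℤ, q.1 ∈ A ∧ q.2 ∈ T ∧ q.1 + q.2 = k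

/-- `(1/p)A` is a spectrum for the `p`-element set `Γ ⊆ ℝ`:
the matrix `((1/√p) e^{2πiλa/p})_{λ∈Γ, a∈A}` is unitary, equivalently
`A` has `p` elements and the rows are mutually orthogonal. -/
def PairSpec (p : ℕ) (Γ : Finset ℝ) (A : Finset ℤ) : Prop :=
  A.card = p ∧ Γ.card = p ∧
  ∀ l ∈ Γ, ∀ m ∈ Γ, l ≠ m →
    (∑ a ∈ A, Complex.exp (2 * Real.pi * Complex.I * ((l : ℂ) - m) * (a : ℂ) / p)) = 0

open Matrix ComplexConjugate

theorem Matrix.eq_zero_of_vecMul_conjTranspose_eq_zero {K n : Type*} [Field K] [StarRing K]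
    [Fintype n] [DecidableEq n] {M : Matrix n n K} {c : K} (hc : c ≠ 0) (hM : M * Mᴴ = c • 1)
    {v : n → K} (hv : v ᵥ* Mᴴ = 0) : v = 0 := by
  have hinv : Mᴴ * (c⁻¹ • M) = 1 := by
    rw [mul_smul_comm, ← smul_mul_assoc]
    refine mul_eq_one_comm.mp ?_
    rw [mul_smul_comm, hM, smul_smul, inv_mul_cancel₀ hc, one_smul]
  rw [← vecMul_one v, ← hinv, ← vecMul_vecMul, hv, zero_vecMul]

theorem norm_sq_le_norm_sum_mul_conj {ι : Type*} [Fintype ι] (z : ι → ℂ) (j : ι) :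
    ‖z j‖ ^ 2 ≤ ‖∑ i, z i * conj (z i)‖ := by
  simp_rw [RCLike.mul_conj]
  norm_cast
  rw [abs_of_nonneg (by positivity)]
  exact Finset.single_le_sum (f := fun i => ‖z i‖ ^ 2) (fun i _ => by positivity)
    (Finset.mem_univ j)

section FourierSeries

variable {T : ℝ} [hT : Fact (0 < T)]

theorem integral_Ico_fourier_eq_zero {m : ℤ} (hm : m ≠ 0) :
    ∫ y in Ico 0 T, fourier m (y : AddCircle T) = 0 := by
  have h := fourierCoeff_eq_intervalIntegral (fourier m : AddCircle T → ℂ) 0 0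
  rw [fourierCoeff_fourier, Pi.single_apply, if_neg (Ne.symm hm), eq_comm, smul_eq_zero] at h
  simpa [fourier_zero, zero_add, intervalIntegral.integral_of_le hT.out.le,
    integral_Ico_eq_integral_Ioc, hT.out.ne'] using h

theorem ae_eq_zero_of_forall_integral_Ico_fourier_mul_eq_zero {f : ℝ → ℂ}
    (hf : MemLp f 2 (volume.restrict (Ico 0 T)))
    (h : ∀ n : ℤ, ∫ y in Ico 0 T, fourier n (y : AddCircle T) * f y = 0) :
    f =ᵐ[volume.restrict (Ico 0 T)] 0 := by
  rw [Measure.restrict_congr_set Ico_ae_eq_Ioc] at hf ⊢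
  have hcoeff : ∀ n, fourierCoeffOn hT.out f n = 0 := fun n => by
    simpa [fourierCoeffOn_eq_integral, intervalIntegral.integral_of_le hT.out.le,
      ← integral_Ico_eq_integral_Ioc, hT.out.ne'] using h (-n)
  have hnorm : ∫ y in Ioc 0 T, ‖f y‖ ^ 2 = 0 := by
    have h0 : HasSum (fun n => ‖fourierCoeffOn hT.out f n‖ ^ 2) 0 := by
      simp [hcoeff, hasSum_zero]
    have := (hasSum_sq_fourierCoeffOn hT.out hf).unique h0
    simpa [intervalIntegral.integral_of_le hT.out.le, hT.out.ne'] using this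
  rw [integral_eq_zero_iff_of_nonneg (fun _ => by positivity)
    (hf.integrable_norm_pow two_ne_zero)] at hnorm
  filter_upwards [hnorm] with y hy
  simpa using hy

variable {ι : Type*} [Fintype ι] [DecidableEq ι] {c : ℂ} {u : ι → ℝ → ι → ℂ}
  {F : ι → ℤ → ℝ → ι → ℂ}

theorem integral_Ico_sum_mul_conj_eq_zero
    (hF : ∀ i n y j, F i n y j = fourier n (y : AddCircle T) * u i y j)
    (hu : ∀ᵐ y ∂volume.restrict (Ico 0 T), ∀ i i',
      ∑ j, u i y j * conj (u i' y j) = if i = i' then c else 0)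
    {i i' : ι} {n n' : ℤ} (hne : (i, n) ≠ (i', n')) :
    ∫ y in Ico 0 T, ∑ j, F i n y j * conj (F i' n' y j) = 0 := by
  have hprod : ∀ y j, F i n y j * conj (F i' n' y j) =
      fourier (n - n') (y : AddCircle T) * (u i y j * conj (u i' y j)) := by
    intro y j
    rw [hF, hF, sub_eq_add_neg, fourier_add, fourier_neg, map_mul]
    ring
  simp_rw [hprod, ← Finset.mul_sum]
  rcases eq_or_ne i i' with rfl | hi
  · have hn : n - n' ≠ 0 := sub_ne_zero.2 fun h => hne (by rw [h])
    calc ∫ y in Ico 0 T, fourier (n - n') (y : AddCircle T) * ∑ j, u i y j * conj (u i y j)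
        = ∫ y in Ico 0 T, fourier (n - n') (y : AddCircle T) * c := by
          refine integral_congr_ae ?_
          filter_upwards [hu] with y hy
          rw [hy i i, if_pos rfl]
      _ = 0 := by rw [integral_mul_const, integral_Ico_fourier_eq_zero hn, zero_mul]
  · refine integral_eq_zero_of_ae ?_
    filter_upwards [hu] with y hy
    simp [hy i i', hi]

theorem ae_eq_zero_of_forall_integral_Ico_sum_mul_conj_eq_zero (hc : c ≠ 0)
    (hF : ∀ i n y j, F i n y j = fourier n (y : AddCircle T) * u i y j)
    (hu : ∀ᵐ y ∂volume.restrict (Ico 0 T), ∀ i i',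
      ∑ j, u i y j * conj (u i' y j) = if i = i' then c else 0)
    (hu_meas : ∀ i j, AEStronglyMeasurable (fun y => u i y j) (volume.restrict (Ico 0 T)))
    {H : ℝ → ι → ℂ} (hH : ∀ j, MemLp (fun y => H y j) 2 (volume.restrict (Ico 0 T)))
    (horth : ∀ i n, ∫ y in Ico 0 T, ∑ j, H y j * conj (F i n y j) = 0) (j : ι) :
    (fun y => H y j) =ᵐ[volume.restrict (Ico 0 T)] 0 := by
  set g : ι → ℝ → ℂ := fun i y => ∑ j, H y j * conj (u i y j) with hg
  have hu_bound : ∀ i j, ∀ᵐ y ∂volume.restrict (Ico 0 T), ‖u i y j‖ ≤ √‖c‖ := fun i j => by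
    filter_upwards [hu] with y hy
    refine (Real.le_sqrt (norm_nonneg _) (norm_nonneg _)).2 ?_
    simpa [hy i i] using norm_sq_le_norm_sum_mul_conj (u i y) j
  have hg_memLp : ∀ i, MemLp (g i) 2 (volume.restrict (Ico 0 T)) := fun i =>
    memLp_finsetSum _ fun j _ => (hH j).of_le_mul ((hH j).1.mul (hu_meas i j).star) <| by
      filter_upwards [hu_bound i j] with y hy
      rw [norm_mul, RCLike.norm_conj, mul_comm]
      gcongr
  have hg_zero : ∀ i, g i =ᵐ[volume.restrict (Ico 0 T)] 0 := fun i =>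
    ae_eq_zero_of_forall_integral_Ico_fourier_mul_eq_zero (hg_memLp i) fun n => by
      rw [← horth i (-n)]
      refine integral_congr_ae (ae_of_all _ fun y => ?_)
      simp only [hg, hF, fourier_neg, map_mul, conj_conj, Finset.mul_sum]
      exact Finset.sum_congr rfl fun j _ => by ring
  filter_upwards [hu, ae_all_iff.2 hg_zero] with y hy hgy
  have hM : of (fun i j => u i y j) * (of fun i j => u i y j)ᴴ = c • 1 := by
    ext i i'
    simpa [mul_apply, one_apply] using hy i i'
  have hv : (fun j => H y j) ᵥ* (of fun i j => u i y j)ᴴ = 0 := by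
    ext i
    simpa [vecMul, dotProduct] using hgy i
  exact congrFun (Matrix.eq_zero_of_vecMul_conjTranspose_eq_zero hc hM hv) j

end FourierSeries

theorem vector_exponentials_form_orthogonal_basis_general
    (p : ℕ)
    (lam : Fin p → ℝ)
    (k : Fin p → ℝ → ℤ) (hkm : ∀ i, Measurable (k i))
    (honb : ∀ᵐ y : ℝ ∂(volume.restrict (Ico (0 : ℝ) (1 / p))), ∀ i i' : Fin p,
      (1 / p : ℂ) * ∑ j : Fin p,
        Complex.exp (2 * Real.pi * Complex.I * ((lam i : ℂ) - lam i') * ((k j y : ℤ) : ℂ) / p)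
      = if i = i' then 1 else 0)
    (F : Fin p → ℤ → ℝ → Fin p → ℂ)
    (hF : ∀ i n y j, F i n y j =
      Complex.exp (2 * Real.pi * Complex.I * ((lam i : ℂ) + (n : ℂ) * p) * (y : ℂ)) *
      Complex.exp (2 * Real.pi * Complex.I * (lam i : ℂ) * ((k j y : ℤ) : ℂ) / p)) :
    (∀ (i i' : Fin p) (n n' : ℤ), (i, n) ≠ (i', n') →
      (∫ y in Ico (0 : ℝ) (1 / p),
        ∑ j : Fin p, F i n y j * (starRingEnd ℂ) (F i' n' y j)) = 0) ∧
    (∀ H : ℝ → Fin p → ℂ,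
      (∀ j : Fin p, MemLp (fun y => H y j) 2 (volume.restrict (Ico (0 : ℝ) (1 / p)))) →
      (∀ (i : Fin p) (n : ℤ),
        (∫ y in Ico (0 : ℝ) (1 / p),
          ∑ j : Fin p, H y j * (starRingEnd ℂ) (F i n y j)) = 0) →
      ∀ j : Fin p, (fun y => H y j)
        =ᵐ[volume.restrict (Ico (0 : ℝ) (1 / p))] 0) := by
  obtain rfl | hp := Nat.eq_zero_or_pos p
  · exact ⟨fun i => i.elim0, fun _ _ _ j => j.elim0⟩
  have hp' : (p : ℂ) ≠ 0 := by exact_mod_cast hp.ne'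
  have : Fact ((0 : ℝ) < 1 / p) := ⟨by positivity⟩
  have hshift : ∀ i n y j, F i n y j = fourier n (y : AddCircle (1 / p : ℝ)) * F i 0 y j := by
    intro i n y j
    rw [fourier_coe_apply, hF, hF, ← mul_assoc]
    congr 1
    rw [← Complex.exp_add]
    congr 1
    push_cast
    field_simp
    ring
  have hgram : ∀ᵐ y ∂volume.restrict (Ico (0 : ℝ) (1 / p)), ∀ i i',
      ∑ j, F i 0 y j * conj (F i' 0 y j) = if i = i' then (p : ℂ) else 0 := by
    filter_upwards [honb] with y hy i i'
    have hterm : ∀ j, F i 0 y j * conj (F i' 0 y j) =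
        Complex.exp (2 * Real.pi * Complex.I * ((lam i : ℂ) - lam i') * (y : ℂ)) *
        Complex.exp (2 * Real.pi * Complex.I * ((lam i : ℂ) - lam i') * ((k j y : ℤ) : ℂ) / p) := by
      intro j
      rw [hF, hF, map_mul, ← Complex.exp_conj, ← Complex.exp_conj, mul_mul_mul_comm,
        ← Complex.exp_add, ← Complex.exp_add]
      congr 2 <;> simp only [map_mul, map_add, map_div₀, Complex.conj_I, Complex.conj_ofReal,
        map_intCast, map_natCast, map_ofNat] <;> ring
    rw [Finset.sum_congr rfl fun j _ => hterm j, ← Finset.mul_sum, ← mul_div_cancel_left₀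
      (∑ j : Fin p, _) (one_div_ne_zero hp'), hy i i']
    split_ifs with h <;> simp [h]
  have hmeas : ∀ i j, AEStronglyMeasurable (fun y => F i 0 y j)
      (volume.restrict (Ico (0 : ℝ) (1 / p))) := fun i j => by
    simp_rw [hF]
    have := hkm j
    fun_prop
  exact ⟨fun i i' n n' hne => integral_Ico_sum_mul_conj_eq_zero hshift hgram hne,
    fun H hH horth => ae_eq_zero_of_forall_integral_Ico_sum_mul_conj_eq_zero hp' hshift hgram
      hmeas hH horth⟩

/-- If for a.e. `y ∈ [0,1/p)` the vectors
`v_i(y) = (1/√p)(e^{2πiλ_i k_j(y)/p})_j` form an orthonormal basis of `ℂ^p`, then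
the functions `F_{i,n}(y) = e^{2πi(λ_i+np)y}·(e^{2πiλ_i k_j(y)/p})_j` form an
orthogonal basis of `L²([0,1/p), ℂ^p)`: they are mutually orthogonal and any
square-integrable `H` orthogonal to all of them vanishes a.e. -/
theorem vector_exponentials_form_orthogonal_basis
    (p : ℕ) (hp : 0 < p)
    (lam : Fin p → ℝ) (hlam_inj : Function.Injective lam)
    (A : Finset ℤ) (hA : PairSpec p (Finset.image lam Finset.univ) A)
    (Ω : Set ℝ) (hbd : IsBounded Ω) (hmeas : MeasurableSet Ω) (hvol : volume Ω = 1)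
    (htile : ∀ᵐ x : ℝ ∂volume, ({j : ℤ | x + (j : ℝ) / p ∈ Ω}).ncard = p)
    (k : Fin p → ℝ → ℤ) (hkm : ∀ i, Measurable (k i))
    (hk : ∀ᵐ x : ℝ ∂volume,
      StrictMono (fun i : Fin p => k i x) ∧
      ∀ j : ℤ, (x + (j : ℝ) / p ∈ Ω ↔ ∃ i : Fin p, k i x = j))
    (honb : ∀ᵐ y : ℝ ∂(volume.restrict (Ico (0 : ℝ) (1 / p))), ∀ i i' : Fin p,
      (1 / p : ℂ) * ∑ j : Fin p,
        Complex.exp (2 * Real.pi * Complex.I * ((lam i : ℂ) - lam i') * ((k j y : ℤ) : ℂ) / p)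
      = if i = i' then 1 else 0)
    (F : Fin p → ℤ → ℝ → Fin p → ℂ)
    (hF : ∀ i n y j, F i n y j =
      Complex.exp (2 * Real.pi * Complex.I * ((lam i : ℂ) + (n : ℂ) * p) * (y : ℂ)) *
      Complex.exp (2 * Real.pi * Complex.I * (lam i : ℂ) * ((k j y : ℤ) : ℂ) / p)) :
    (∀ (i i' : Fin p) (n n' : ℤ), (i, n) ≠ (i', n') →
      (∫ y in Ico (0 : ℝ) (1 / p),
        ∑ j : Fin p, F i n y j * (starRingEnd ℂ) (F i' n' y j)) = 0) ∧
    (∀ H : ℝ → Fin p → ℂ,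
      (∀ j : Fin p, MemLp (fun y => H y j) 2 (volume.restrict (Ico (0 : ℝ) (1 / p)))) →
      (∀ (i : Fin p) (n : ℤ),
        (∫ y in Ico (0 : ℝ) (1 / p),
          ∑ j : Fin p, H y j * (starRingEnd ℂ) (F i n y j)) = 0) →
      ∀ j : Fin p, (fun y => H y j)
        =ᵐ[volume.restrict (Ico (0 : ℝ) (1 / p))] 0) :=
  vector_exponentials_form_orthogonal_basis_general p lam k hkm honb F hF
end
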